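/- arXiv:2505.08279 — 3 statements merged into one kernel-verified Lean document; each statement's English description precedes it below -/
import Mathlib

section
/- Let t be a positive integer and let 𝓐 ⊆ C([n],k) be t-intersecting. Then for every 1 ≤ i < j ≤ n, ζ_{k−1}(Δ_{ij}(𝓐)) ≥ ζ_{k−1}(𝓐). -/
open Finset

/-- `[n] = {1, …, n}` as a finset of naturals. -/
def Iv (n : ℕ) : Finset ℕ := Finset.Icc 1 n

/-- The collection of `k`-element subsets of `[n]`. -/
def KSets (n k : ℕ) : Finset (Finset ℕ) := (Iv n).powersetCard k

/-- Codegree of `E` in the family `F`: the number of members of `F` containing `E`. -/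
def codeg (F : Finset (Finset ℕ)) (E : Finset ℕ) : ℕ :=
  (F.filter fun A => E ⊆ A).card

/-- Codegree squared sum of a `k`-uniform family on `[n]`. -/
def co2 (n k : ℕ) (F : Finset (Finset ℕ)) : ℕ :=
  ∑ E ∈ KSets n (k - 1), codeg F E ^ 2

/-- `t`-intersecting family. -/
def IntersectingT (t : ℕ) (F : Finset (Finset ℕ)) : Prop :=
  ∀ A ∈ F, ∀ B ∈ F, t ≤ (A ∩ B).card

/-- `ζ_u(F)`: the number of unordered pairs of distinct members of `F` meeting in
exactly `u` elements. -/
def zeta (u : ℕ) (F : Finset (Finset ℕ)) : ℕ :=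
  ((F.offDiag.filter fun p => (p.1 ∩ p.2).card = u).image
    fun p => ({p.1, p.2} : Finset (Finset ℕ))).card

/-- `ζ_{u,v}(𝓖,𝓗)`: the number of unordered pairs `{F,G}` with `F ∈ 𝓖`, `G ∈ 𝓗`,
`|F| = |G| = u+1`, `|F ∩ G| = u` and `v ∈ F ∩ G`. -/
def zeta2v (u v : ℕ) (G H : Finset (Finset ℕ)) : ℕ :=
  (((G ×ˢ H).filter fun p =>
      p.1.card = u + 1 ∧ p.2.card = u + 1 ∧ (p.1 ∩ p.2).card = u ∧ v ∈ p.1 ∩ p.2).image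
    fun p => ({p.1, p.2} : Finset (Finset ℕ))).card

/-- The Hilton–Milner type family `H(n,k,t)`. -/
def HM (n k t : ℕ) : Finset (Finset ℕ) :=
  ((KSets n k).filter fun F => Iv t ⊆ F ∧ (F ∩ Finset.Icc (t + 1) (k + 1)).Nonempty) ∪
    ((Iv t).image fun i => (Iv (k + 1)).erase i)

/-- The Frankl type family `A(n,k,t)`. -/
def AK (n k t : ℕ) : Finset (Finset ℕ) :=
  (KSets n k).filter fun F => t + 1 ≤ (F ∩ Iv (t + 2)).card

/-- Two families on `[n]` are isomorphic if one is the image of the other under a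
permutation of `[n]` applied elementwise to each member. -/
def Isom (n : ℕ) (F G : Finset (Finset ℕ)) : Prop :=
  ∃ σ : Equiv.Perm ℕ, (∀ x ∈ Iv n, σ x ∈ Iv n) ∧ G = F.image fun A => A.image σ

/-- The elementary shift `δ_{ij}` of a single set. -/
def shiftSet (i j : ℕ) (𝓐 : Finset (Finset ℕ)) (A : Finset ℕ) : Finset ℕ :=
  if j ∈ A ∧ i ∉ A ∧ insert i (A.erase j) ∉ 𝓐 then insert i (A.erase j) else A

/-- The shift operation `Δ_{ij}` on families. -/
def shiftFam (i j : ℕ) (𝓐 : Finset (Finset ℕ)) : Finset (Finset ℕ) :=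
  𝓐.image (shiftSet i j 𝓐)

/-- Left-compressed family. -/
def LeftCompressed (n : ℕ) (F : Finset (Finset ℕ)) : Prop :=
  ∀ i j : ℕ, 1 ≤ i → i < j → j ≤ n → shiftFam i j F = F

/-- `g` is a generating set of `F ⊆ C([n],k)`: its members are subsets of `[n]` of size at
most `k`, and `U(g) ∩ C([n],k) = F`. -/
def IsGenSet (n k : ℕ) (F g : Finset (Finset ℕ)) : Prop :=
  (∀ E ∈ g, E ⊆ Iv n ∧ E.card ≤ k) ∧
    (KSets n k).filter (fun A => ∃ E ∈ g, E ⊆ A) = F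

/-- `s⁺` of a collection of finsets: the maximum element appearing. -/
def sPlus (g : Finset (Finset ℕ)) : ℕ := g.sup fun E => E.sup id

/-- `g*_i`: the members of `g` of size `i` containing `s`. -/
def gStar (g : Finset (Finset ℕ)) (s i : ℕ) : Finset (Finset ℕ) :=
  g.filter fun E => s ∈ E ∧ E.card = i

/-- `𝒟(ℰ) = ∪_{E ∈ ℰ} {B ∈ C([n],k) : B ∩ [s⁺(E)] = E}`. -/
def Dcal (n k : ℕ) (ℰ : Finset (Finset ℕ)) : Finset (Finset ℕ) :=
  (KSets n k).filter fun B => ∃ E ∈ ℰ, B ∩ Iv (E.sup id) = E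

/-- The family of `k`-subsets of `[n]` generated by `g`. -/
def genFam (n k : ℕ) (g : Finset (Finset ℕ)) : Finset (Finset ℕ) :=
  (KSets n k).filter fun A => ∃ E ∈ g, E ⊆ A

/-- Integer binomial coefficient: `C(a,b) = 0` when `b < 0` or `b > a`. -/
def ichoose (a b : ℤ) : ℤ :=
  if 0 ≤ b ∧ b ≤ a then (a.toNat.choose b.toNat : ℤ) else 0

/-! For a `(k+1)`-uniform family, `ζ_k` is the sum of `C(d(E), 2)` over the `k`-sets `E`, where
`d(E)` is the codegree of `E`. The shift `δ_{ij}` changes codegrees only on the pairs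
`E, E' = E - j + i` with `j ∈ E`, `i ∉ E`: if `b` members through `E` are moved, then `d(E) = a + b`
drops to `a` while `d(E')` rises from `c` to `c + b`, and `a ≤ c`. By convexity of `C(·, 2)` each
such pair gains, and the swap `(i j)` pairs up the `k`-sets. -/

theorem Nat.choose_two_add (a b : ℕ) :
    (a + b).choose 2 = a.choose 2 + b.choose 2 + a * b := by
  induction b with
  | zero => simp
  | succ b ih =>
    rw [← add_assoc, Nat.choose_succ_succ, Nat.choose_one_right, ih,
      Nat.choose_succ_succ b 1, Nat.choose_one_right]
    ring

theorem Nat.choose_two_add_add_choose_two_le {a b c : ℕ} (h : a ≤ c) :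
    (a + b).choose 2 + c.choose 2 ≤ a.choose 2 + (c + b).choose 2 := by
  rw [Nat.choose_two_add, Nat.choose_two_add]
  have := Nat.mul_le_mul_right b h
  omega

namespace Finset

variable {α : Type*}

theorem sum_le_sum_of_add_comp_le {M : Type*} [AddCommMonoid M] [LinearOrder M]
    [IsOrderedCancelAddMonoid M] {s : Finset α} {σ : α → α} (hσ : ∀ a ∈ s, σ a ∈ s)
    (hσσ : ∀ a ∈ s, σ (σ a) = a) {f g : α → M} (h : ∀ a ∈ s, f a + f (σ a) ≤ g a + g (σ a)) :
    ∑ a ∈ s, f a ≤ ∑ a ∈ s, g a := by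
  have hcomp (f : α → M) : ∑ a ∈ s, f (σ a) = ∑ a ∈ s, f a :=
    sum_nbij' σ σ hσ hσ hσσ hσσ fun _ _ => rfl
  have hsum := sum_le_sum h
  rw [sum_add_distrib, sum_add_distrib, hcomp, hcomp] at hsum
  exact not_lt.1 fun hlt => (add_lt_add hlt hlt).not_ge hsum

variable [DecidableEq α] {i j : α} {A B E : Finset α}

theorem card_inter_lt_of_ne {r : ℕ} (hA : #A = r) (hB : #B = r) (hAB : A ≠ B) : #(A ∩ B) < r := by
  refine lt_of_le_of_ne (hA ▸ card_le_card inter_subset_left) fun h => hAB ?_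
  have hsub : A ⊆ B := inter_eq_left.mp (eq_of_subset_of_card_le inter_subset_left (by omega))
  exact eq_of_subset_of_card_le hsub (by omega)

theorem inter_eq_of_subset_of_card_eq {k : ℕ} (hA : #A = k + 1) (hB : #B = k + 1) (hAB : A ≠ B)
    (hEA : E ⊆ A) (hEB : E ⊆ B) (hE : #E = k) : A ∩ B = E :=
  (eq_of_subset_of_card_le (subset_inter hEA hEB)
    (hE ▸ Nat.le_of_lt_succ (card_inter_lt_of_ne hA hB hAB))).symm

theorem insert_erase_insert_erase (hjA : j ∈ A) (hiA : i ∉ A) :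
    insert j ((insert i (A.erase j)).erase i) = A := by
  rw [erase_insert fun h => hiA (mem_of_mem_erase h), insert_erase hjA]

theorem notMem_insert_erase (hij : i ≠ j) : j ∉ insert i (A.erase j) := by
  simp [hij.symm]

theorem card_insert_erase_of_mem_of_notMem (hjA : j ∈ A) (hiA : i ∉ A) :
    #(insert i (A.erase j)) = #A := by
  rw [card_insert_of_notMem fun h => hiA (mem_of_mem_erase h), card_erase_add_one hjA]

theorem subset_insert_erase_iff (hij : i ≠ j) (hiA : i ∉ A) (hE : i ∈ E ↔ j ∈ E) :
    E ⊆ insert i (A.erase j) ↔ E ⊆ A := by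
  simp only [subset_iff, mem_insert, mem_erase]
  grind

theorem insert_erase_subset_insert_erase_iff (hjA : j ∈ A) (hiE : i ∉ E) :
    insert i (E.erase j) ⊆ insert i (A.erase j) ↔ E ⊆ A := by
  refine ⟨fun h x hxE => ?_, fun h => insert_subset_insert i (erase_subset_erase j h)⟩
  by_cases hxj : x = j
  · exact hxj ▸ hjA
  rcases mem_insert.1 (h (mem_insert_of_mem (mem_erase.2 ⟨hxj, hxE⟩))) with rfl | hxA
  · exact absurd hxE hiE
  · exact mem_of_mem_erase hxA

theorem map_swap_of_mem_of_notMem (hjE : j ∈ E) (hiE : i ∉ E) :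
    E.map (Equiv.swap i j).toEmbedding = insert i (E.erase j) := by
  ext x
  simp only [mem_map_equiv, Equiv.symm_swap, mem_insert, mem_erase]
  rcases eq_or_ne x i with rfl | hxi
  · simp [hjE]
  rcases eq_or_ne x j with rfl | hxj
  · simp [hiE, hxi]
  · simp [Equiv.swap_apply_of_ne_of_ne hxi hxj, hxi, hxj]

theorem map_swap_of_mem_iff (hE : i ∈ E ↔ j ∈ E) : E.map (Equiv.swap i j).toEmbedding = E := by
  ext x
  simp only [mem_map_equiv, Equiv.symm_swap]
  rcases eq_or_ne x i with rfl | hxi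
  · simpa using hE.symm
  rcases eq_or_ne x j with rfl | hxj
  · simpa using hE
  · simp [Equiv.swap_apply_of_ne_of_ne hxi hxj]

theorem map_swap_map_swap :
    (E.map (Equiv.swap i j).toEmbedding).map (Equiv.swap i j).toEmbedding = E := by
  ext
  simp

theorem map_swap_mem_powersetCard {U : Finset α} {r : ℕ} (hi : i ∈ U) (hj : j ∈ U)
    (hE : E ∈ U.powersetCard r) : E.map (Equiv.swap i j).toEmbedding ∈ U.powersetCard r := by
  rw [mem_powersetCard, card_map] at *
  refine ⟨?_, hE.2⟩
  rw [← map_swap_of_mem_iff (iff_of_true hi hj)]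
  exact map_subset_map.2 hE.1

end Finset

/-- Two distinct `(k+1)`-sets meeting in `k` elements contain exactly one common `k`-set, so
`ζ_k` counts the pairs of members through each `k`-set `E`. -/
theorem zeta_eq_sum_choose_codeg {U : Finset ℕ} {F : Finset (Finset ℕ)} {k : ℕ}
    (hF : F ⊆ U.powersetCard (k + 1)) :
    zeta k F = ∑ E ∈ U.powersetCard k, (codeg F E).choose 2 := by
  have hcard {A : Finset ℕ} (hA : A ∈ F) : #A = k + 1 := (mem_powersetCard.1 (hF hA)).2
  have hpair {E S : Finset _} (hS : S ∈ (F.filter (E ⊆ ·)).powersetCard 2) :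
      ∃ A B, A ∈ F ∧ B ∈ F ∧ A ≠ B ∧ E ⊆ A ∧ E ⊆ B ∧ S = {A, B} := by
    obtain ⟨hSF, hS2⟩ := mem_powersetCard.1 hS
    obtain ⟨A, B, hAB, rfl⟩ := card_eq_two.1 hS2
    obtain ⟨hA, hEA⟩ := mem_filter.1 (hSF (mem_insert_self A {B}))
    obtain ⟨hB, hEB⟩ := mem_filter.1 (hSF (mem_insert_of_mem (mem_singleton_self B)))
    exact ⟨A, B, hA, hB, hAB, hEA, hEB, rfl⟩
  have hpairs : ((F.offDiag.filter fun p => #(p.1 ∩ p.2) = k).image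
      fun p => ({p.1, p.2} : Finset (Finset ℕ))) =
      (U.powersetCard k).biUnion fun E => (F.filter (E ⊆ ·)).powersetCard 2 := by
    ext S
    simp only [mem_image, mem_filter, mem_offDiag, mem_biUnion, Prod.exists]
    constructor
    · rintro ⟨A, B, ⟨⟨hA, hB, hAB⟩, hk⟩, rfl⟩
      refine ⟨A ∩ B, mem_powersetCard.2 ⟨inter_subset_left.trans ?_, hk⟩, ?_⟩
      · exact (mem_powersetCard.1 (hF hA)).1
      refine mem_powersetCard.2 ⟨?_, card_pair hAB⟩
      simp [insert_subset_iff, hA, hB]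
    · rintro ⟨E, hE, hS⟩
      obtain ⟨A, B, hA, hB, hAB, hEA, hEB, rfl⟩ := hpair hS
      refine ⟨A, B, ⟨⟨hA, hB, hAB⟩, ?_⟩, rfl⟩
      rw [inter_eq_of_subset_of_card_eq (hcard hA) (hcard hB) hAB hEA hEB
        (mem_powersetCard.1 hE).2]
      exact (mem_powersetCard.1 hE).2
  rw [zeta, hpairs, card_biUnion]
  · simp only [card_powersetCard, codeg]
  · intro E₁ hE₁ E₂ hE₂ hne
    refine disjoint_left.2 fun S hS₁ hS₂ => hne ?_
    obtain ⟨A, B, hA, hB, hAB, hEA, hEB, rfl⟩ := hpair hS₁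
    have hS₂F := (mem_powersetCard.1 hS₂).1
    have hE₂A := (mem_filter.1 (hS₂F (mem_insert_self A {B}))).2
    have hE₂B := (mem_filter.1 (hS₂F (mem_insert_of_mem (mem_singleton_self B)))).2
    rw [← inter_eq_of_subset_of_card_eq (hcard hA) (hcard hB) hAB hEA hEB
        (mem_powersetCard.1 hE₁).2,
      inter_eq_of_subset_of_card_eq (hcard hA) (hcard hB) hAB hE₂A hE₂B
        (mem_powersetCard.1 hE₂).2]

def shiftMoved (i j : ℕ) (𝓐 : Finset (Finset ℕ)) : Finset (Finset ℕ) :=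
  𝓐.filter fun A => j ∈ A ∧ i ∉ A ∧ insert i (A.erase j) ∉ 𝓐

section Shift

variable {i j : ℕ} {𝓐 : Finset (Finset ℕ)} {E : Finset ℕ}

theorem shiftMoved_subset : shiftMoved i j 𝓐 ⊆ 𝓐 := filter_subset _ _

theorem shiftFam_eq_sdiff_union :
    shiftFam i j 𝓐 = (𝓐 \ shiftMoved i j 𝓐) ∪
      (shiftMoved i j 𝓐).image fun A => insert i (A.erase j) := by
  ext B
  simp only [shiftFam, shiftSet, shiftMoved, mem_image, mem_union, mem_sdiff, mem_filter]
  constructor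
  · rintro ⟨A, hA, rfl⟩
    split_ifs with h
    · exact Or.inr ⟨A, ⟨hA, h⟩, rfl⟩
    · exact Or.inl ⟨hA, fun h' => h h'.2⟩
  · rintro (⟨hB, hmove⟩ | ⟨A, ⟨hA, h⟩, rfl⟩)
    · exact ⟨B, hB, if_neg fun h => hmove ⟨hB, h⟩⟩
    · exact ⟨A, hA, if_pos h⟩

theorem disjoint_sdiff_image_shiftMoved :
    Disjoint (𝓐 \ shiftMoved i j 𝓐) ((shiftMoved i j 𝓐).image fun A => insert i (A.erase j)) := by
  simp only [disjoint_right, mem_image, shiftMoved, mem_filter, mem_sdiff]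
  rintro _ ⟨A, ⟨_, _, _, hnot⟩, rfl⟩ ⟨hmem, _⟩
  exact hnot hmem

theorem injOn_insert_erase_shiftMoved :
    Set.InjOn (fun A : Finset ℕ => insert i (A.erase j)) (shiftMoved i j 𝓐 : Set (Finset ℕ)) := by
  intro A hA B hB hAB
  simp only [shiftMoved, coe_filter, Set.mem_ofPred_eq] at hA hB hAB
  rw [← insert_erase_insert_erase hA.2.1 hA.2.2.1, hAB,
    insert_erase_insert_erase hB.2.1 hB.2.2.1]

theorem codeg_union_of_disjoint {F G : Finset (Finset ℕ)} (h : Disjoint F G) (E : Finset ℕ) :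
    codeg (F ∪ G) E = codeg F E + codeg G E := by
  rw [codeg, filter_union, card_union_of_disjoint (disjoint_filter_filter h)]
  rfl

theorem codeg_sdiff_add_codeg {F G : Finset (Finset ℕ)} (h : G ⊆ F) (E : Finset ℕ) :
    codeg (F \ G) E + codeg G E = codeg F E := by
  rw [← codeg_union_of_disjoint sdiff_disjoint, sdiff_union_of_subset h]

theorem codeg_shiftFam (E : Finset ℕ) :
    codeg (shiftFam i j 𝓐) E = codeg (𝓐 \ shiftMoved i j 𝓐) E +
      #((shiftMoved i j 𝓐).filter fun A => E ⊆ insert i (A.erase j)) := by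
  rw [shiftFam_eq_sdiff_union, codeg_union_of_disjoint disjoint_sdiff_image_shiftMoved]
  congr 1
  rw [codeg, filter_image,
    card_image_of_injOn (injOn_insert_erase_shiftMoved.mono (filter_subset _ _))]

theorem codeg_shiftFam_of_iff (hij : i ≠ j) (hE : i ∈ E ↔ j ∈ E) :
    codeg (shiftFam i j 𝓐) E = codeg 𝓐 E := by
  rw [codeg_shiftFam, ← codeg_sdiff_add_codeg (shiftMoved_subset (i := i) (j := j) (𝓐 := 𝓐)),
    codeg, codeg]
  congr 2
  refine filter_congr fun A hA => ?_
  exact subset_insert_erase_iff hij (mem_filter.1 hA).2.2.1 hE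

theorem codeg_shiftFam_of_mem (hij : i ≠ j) (hjE : j ∈ E) :
    codeg (shiftFam i j 𝓐) E = codeg (𝓐 \ shiftMoved i j 𝓐) E := by
  rw [codeg_shiftFam, add_eq_left, card_eq_zero, filter_eq_empty_iff]
  exact fun _ _ hE => notMem_insert_erase hij (hE hjE)

theorem codeg_shiftFam_insert_erase (hiE : i ∉ E) :
    codeg (shiftFam i j 𝓐) (insert i (E.erase j)) =
      codeg 𝓐 (insert i (E.erase j)) + codeg (shiftMoved i j 𝓐) E := by
  have hmoved : codeg (shiftMoved i j 𝓐) (insert i (E.erase j)) = 0 := by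
    rw [codeg, card_eq_zero, filter_eq_empty_iff]
    exact fun A hA hE => (mem_filter.1 hA).2.2.1 (hE (mem_insert_self i _))
  have hsplit := codeg_sdiff_add_codeg (shiftMoved_subset (i := i) (j := j) (𝓐 := 𝓐))
    (insert i (E.erase j))
  rw [hmoved, add_zero] at hsplit
  rw [codeg_shiftFam, hsplit, codeg, codeg]
  congr 2
  refine filter_congr fun A hA => ?_
  exact insert_erase_subset_insert_erase_iff (mem_filter.1 hA).2.1 hiE

/-- A member of `𝓐` through `E` that stays put either contains `i`, or its image under `δ_{ij}`
was already in `𝓐`; either way it gives a member through `E - j + i`. -/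
theorem codeg_sdiff_shiftMoved_le (hij : i ≠ j) (hjE : j ∈ E) (hiE : i ∉ E) :
    codeg (𝓐 \ shiftMoved i j 𝓐) E ≤ codeg 𝓐 (insert i (E.erase j)) := by
  refine card_le_card_of_injOn (fun A => if i ∈ A then A else insert i (A.erase j)) ?_ ?_
  · intro A hA
    simp only [coe_filter, mem_sdiff, shiftMoved, mem_filter, Set.mem_ofPred_eq, not_and,
      not_not] at hA ⊢
    obtain ⟨⟨hA, hstay⟩, hEA⟩ := hA
    split_ifs with hiA
    · refine ⟨hA, insert_subset hiA ((erase_subset j E).trans hEA)⟩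
    · exact ⟨hstay hA (hEA hjE) hiA, (insert_erase_subset_insert_erase_iff (hEA hjE) hiE).2 hEA⟩
  · intro A hA B hB hAB
    simp only [coe_filter, Set.mem_ofPred_eq] at hA hB hAB
    have hjA := hA.2 hjE
    have hjB := hB.2 hjE
    split_ifs at hAB with hiA hiB hiB
    · exact hAB
    · exact absurd (hAB ▸ hjA) (notMem_insert_erase hij)
    · exact absurd (hAB ▸ hjB) (notMem_insert_erase hij)
    · rw [← insert_erase_insert_erase hjA hiA, hAB, insert_erase_insert_erase hjB hiB]

theorem choose_codeg_add_choose_codeg_le_shiftFam (hij : i ≠ j) (hjE : j ∈ E) (hiE : i ∉ E) :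
    (codeg 𝓐 E).choose 2 + (codeg 𝓐 (insert i (E.erase j))).choose 2 ≤
      (codeg (shiftFam i j 𝓐) E).choose 2 +
        (codeg (shiftFam i j 𝓐) (insert i (E.erase j))).choose 2 := by
  rw [← codeg_sdiff_add_codeg (shiftMoved_subset (i := i) (j := j)) E,
    codeg_shiftFam_of_mem hij hjE, codeg_shiftFam_insert_erase hiE]
  exact Nat.choose_two_add_add_choose_two_le (codeg_sdiff_shiftMoved_le hij hjE hiE)

end Shift

theorem shiftFam_subset_powersetCard {i j r : ℕ} {U : Finset ℕ} {𝓐 : Finset (Finset ℕ)}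
    (hi : i ∈ U) (h𝓐 : 𝓐 ⊆ U.powersetCard r) : shiftFam i j 𝓐 ⊆ U.powersetCard r := by
  intro B hB
  rw [shiftFam_eq_sdiff_union, mem_union, mem_image] at hB
  rcases hB with hB | ⟨A, hA, rfl⟩
  · exact h𝓐 (mem_sdiff.1 hB).1
  · obtain ⟨hA, hjA, hiA, -⟩ := mem_filter.1 hA
    obtain ⟨hAU, hAr⟩ := mem_powersetCard.1 (h𝓐 hA)
    refine mem_powersetCard.2 ⟨insert_subset hi ((erase_subset j A).trans hAU), ?_⟩
    rw [card_insert_erase_of_mem_of_notMem hjA hiA, hAr]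

theorem choose_codeg_add_choose_codeg_map_swap_le {i j : ℕ} {𝓐 : Finset (Finset ℕ)}
    (hij : i ≠ j) (E : Finset ℕ) :
    (codeg 𝓐 E).choose 2 + (codeg 𝓐 (E.map (Equiv.swap i j).toEmbedding)).choose 2 ≤
      (codeg (shiftFam i j 𝓐) E).choose 2 +
        (codeg (shiftFam i j 𝓐) (E.map (Equiv.swap i j).toEmbedding)).choose 2 := by
  by_cases hji : j ∈ E ∧ i ∉ E
  · rw [map_swap_of_mem_of_notMem hji.1 hji.2]
    exact choose_codeg_add_choose_codeg_le_shiftFam hij hji.1 hji.2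
  by_cases hij' : i ∈ E ∧ j ∉ E
  · obtain ⟨F, hjF, hiF, rfl⟩ :
        ∃ F, j ∈ F ∧ i ∉ F ∧ E = F.map (Equiv.swap i j).toEmbedding :=
      ⟨E.map (Equiv.swap i j).toEmbedding, by simp [hij'.1], by simp [hij'.2],
        map_swap_map_swap.symm⟩
    rw [map_swap_map_swap, map_swap_of_mem_of_notMem hjF hiF]
    have := choose_codeg_add_choose_codeg_le_shiftFam (𝓐 := 𝓐) hij hjF hiF
    omega
  · have hiff : i ∈ E ↔ j ∈ E := by tauto
    rw [map_swap_of_mem_iff hiff, codeg_shiftFam_of_iff hij hiff]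

theorem zeta_le_zeta_shiftFam {𝓐 : Finset (Finset ℕ)} {k i j : ℕ} (hij : i ≠ j)
    (h𝓐 : (𝓐 : Set (Finset ℕ)).Sized (k + 1)) : zeta k 𝓐 ≤ zeta k (shiftFam i j 𝓐) := by
  set U := insert i (insert j (𝓐.sup id))
  have hi : i ∈ U := mem_insert_self i _
  have hj : j ∈ U := mem_insert_of_mem (mem_insert_self j _)
  have hU : 𝓐 ⊆ U.powersetCard (k + 1) := fun A hA =>
    mem_powersetCard.2 ⟨(le_sup (f := id) hA).trans ((subset_insert _ _).trans
      (subset_insert _ _)), h𝓐 hA⟩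
  rw [zeta_eq_sum_choose_codeg hU, zeta_eq_sum_choose_codeg (shiftFam_subset_powersetCard hi hU)]
  exact sum_le_sum_of_add_comp_le (fun _ => map_swap_mem_powersetCard hi hj)
    (fun _ _ => map_swap_map_swap) fun E _ => choose_codeg_add_choose_codeg_map_swap_le hij E

theorem stmt_5_general (n k : ℕ) (hk : 0 < k)
    (𝓐 : Finset (Finset ℕ)) (h𝓐 : 𝓐 ⊆ KSets n k)
    (i j : ℕ) (hij : i < j) :
    zeta (k - 1) 𝓐 ≤ zeta (k - 1) (shiftFam i j 𝓐) := by
  obtain ⟨k, rfl⟩ := Nat.exists_eq_add_of_lt hk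
  exact zeta_le_zeta_shiftFam hij.ne fun A hA => (mem_powersetCard.1 (h𝓐 hA)).2

/-- **Shifting does not decrease the number of pairs meeting in `k-1` elements.** -/
theorem stmt_5 (n k t : ℕ) (ht : 0 < t) (hk : 0 < k) (hkn : k ≤ n)
    (𝓐 : Finset (Finset ℕ)) (h𝓐 : 𝓐 ⊆ KSets n k) (hint : IntersectingT t 𝓐)
    (i j : ℕ) (hi : 1 ≤ i) (hij : i < j) (hjn : j ≤ n) :
    zeta (k - 1) 𝓐 ≤ zeta (k - 1) (shiftFam i j 𝓐) :=
  stmt_5_general n k hk 𝓐 h𝓐 i j hij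
end

section
/- Let t be a positive integer and let 𝓐 ⊆ C([n],k) be t-intersecting. Then for every 1 ≤ i < j ≤ n, co2(Δ_{ij}(𝓐)) ≥ co2(𝓐). In particular, there exists a left-compressed t-intersecting family 𝓑 ⊆ C([n],k) with co2(𝓑) ≥ co2(𝓐). -/
open Finset

namespace Stmt6Aux

/-- replacement set -/
abbrev tau (i j : ℕ) (X : Finset ℕ) : Finset ℕ := insert i (X.erase j)

/-- candidate condition -/
abbrev cnd (i j : ℕ) (X : Finset ℕ) : Prop := j ∈ X ∧ i ∉ X

/-- moving condition -/
abbrev Mv (i j : ℕ) (𝓐 : Finset (Finset ℕ)) (X : Finset ℕ) : Prop :=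
  j ∈ X ∧ i ∉ X ∧ insert i (X.erase j) ∉ 𝓐

lemma mem_tau {i j x : ℕ} {X : Finset ℕ} :
    x ∈ tau i j X ↔ x = i ∨ (x ∈ X ∧ x ≠ j) := by
  simp [tau, and_comm]

lemma notMem_tau_self {i j : ℕ} (hij : i ≠ j) (X : Finset ℕ) : j ∉ tau i j X := by
  simp [mem_tau, hij.symm, fun h : j = i => hij h.symm]

lemma card_tau {i j : ℕ} {X : Finset ℕ} (hj : j ∈ X) (hi : i ∉ X) :
    (tau i j X).card = X.card := by
  rw [tau, Finset.card_insert_of_notMem (fun h => hi (Finset.mem_of_mem_erase h)),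
    Finset.card_erase_of_mem hj]
  have : 1 ≤ X.card := Finset.card_pos.2 ⟨j, hj⟩
  omega

lemma tau_inter {i j : ℕ} (A B : Finset ℕ) :
    tau i j A ∩ tau i j B = tau i j (A ∩ B) := by
  ext x; simp [mem_tau, Finset.mem_inter]; tauto

lemma tau_inter_right {i j : ℕ} {A B : Finset ℕ} (hiB : i ∈ B) :
    tau i j A ∩ B = tau i j (A ∩ B) := by
  ext x
  simp only [Finset.mem_inter, mem_tau]
  constructor
  · rintro ⟨hi | ⟨hxA, hxj⟩, hxB⟩
    · exact Or.inl hi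
    · exact Or.inr ⟨⟨hxA, hxB⟩, hxj⟩
  · rintro (rfl | ⟨⟨hxA, hxB⟩, hxj⟩)
    · exact ⟨Or.inl rfl, hiB⟩
    · exact ⟨Or.inr ⟨hxA, hxj⟩, hxB⟩

lemma tau_inter_erase {i j : ℕ} {A B : Finset ℕ} (hiB : i ∉ B) :
    tau i j A ∩ B = (A ∩ B).erase j := by
  ext x
  simp only [Finset.mem_inter, mem_tau, Finset.mem_erase]
  constructor
  · rintro ⟨rfl | ⟨hxA, hxj⟩, hxB⟩
    · exact absurd hxB hiB
    · exact ⟨hxj, hxA, hxB⟩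
  · rintro ⟨hxj, hxA, hxB⟩
    exact ⟨Or.inr ⟨hxA, hxj⟩, hxB⟩

lemma inter_subset_tau_inter {i j : ℕ} {A B : Finset ℕ} (hjB : j ∉ B) :
    A ∩ B ⊆ tau i j A ∩ B := by
  intro x hx
  rw [Finset.mem_inter] at hx ⊢
  exact ⟨mem_tau.2 (Or.inr ⟨hx.1, fun h => hjB (h ▸ hx.2)⟩), hx.2⟩

lemma tau_inj {i j : ℕ} {A B : Finset ℕ} (hjA : j ∈ A) (hiA : i ∉ A)
    (hjB : j ∈ B) (hiB : i ∉ B) (h : tau i j A = tau i j B) : A = B := by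
  ext x
  rcases eq_or_ne x i with rfl | hxi
  · simp [hiA, hiB]
  rcases eq_or_ne x j with rfl | hxj
  · simp [hjA, hjB]
  constructor
  · intro hx
    have : x ∈ tau i j B := h ▸ mem_tau.2 (Or.inr ⟨hx, hxj⟩)
    rcases mem_tau.1 this with rfl | hb
    · exact absurd rfl hxi
    · exact hb.1
  · intro hx
    have : x ∈ tau i j A := h.symm ▸ mem_tau.2 (Or.inr ⟨hx, hxj⟩)
    rcases mem_tau.1 this with rfl | hb
    · exact absurd rfl hxi
    · exact hb.1

lemma shiftSet_pos {i j : ℕ} {𝓐 : Finset (Finset ℕ)} {A : Finset ℕ}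
    (h : Mv i j 𝓐 A) : shiftSet i j 𝓐 A = tau i j A := if_pos h

lemma shiftSet_neg {i j : ℕ} {𝓐 : Finset (Finset ℕ)} {A : Finset ℕ}
    (h : ¬ Mv i j 𝓐 A) : shiftSet i j 𝓐 A = A := if_neg h

lemma shiftSet_injOn {i j : ℕ} {𝓐 : Finset (Finset ℕ)} :
    ∀ A ∈ 𝓐, ∀ B ∈ 𝓐, shiftSet i j 𝓐 A = shiftSet i j 𝓐 B → A = B := by
  intro A hA B hB h
  by_cases hMA : Mv i j 𝓐 A <;> by_cases hMB : Mv i j 𝓐 B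
  · rw [shiftSet_pos hMA, shiftSet_pos hMB] at h
    exact tau_inj hMA.1 hMA.2.1 hMB.1 hMB.2.1 h
  · rw [shiftSet_pos hMA, shiftSet_neg hMB] at h
    have : tau i j A ∈ 𝓐 := by rw [h]; exact hB
    exact absurd this hMA.2.2
  · rw [shiftSet_neg hMA, shiftSet_pos hMB] at h
    have : tau i j B ∈ 𝓐 := by rw [← h]; exact hA
    exact absurd this hMB.2.2
  · rwa [shiftSet_neg hMA, shiftSet_neg hMB] at h

lemma mem_KSets {n k : ℕ} {A : Finset ℕ} :
    A ∈ KSets n k ↔ A ⊆ Iv n ∧ A.card = k := Finset.mem_powersetCard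

lemma shiftFam_subset_KSets {n k i j : ℕ} {𝓐 : Finset (Finset ℕ)}
    (h𝓐 : 𝓐 ⊆ KSets n k) (h1 : 1 ≤ i) (hij : i < j) (hjn : j ≤ n) :
    shiftFam i j 𝓐 ⊆ KSets n k := by
  intro X hX
  rcases Finset.mem_image.1 hX with ⟨A, hA, rfl⟩
  have hAK := mem_KSets.1 (h𝓐 hA)
  by_cases hMA : Mv i j 𝓐 A
  · rw [shiftSet_pos hMA]
    refine mem_KSets.2 ⟨?_, by rw [card_tau hMA.1 hMA.2.1]; exact hAK.2⟩
    intro x hx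
    rcases mem_tau.1 hx with rfl | hb
    · exact Finset.mem_Icc.2 ⟨h1, le_trans (le_of_lt hij) hjn⟩
    · exact hAK.1 hb.1
  · rw [shiftSet_neg hMA]; exact h𝓐 hA

lemma shiftFam_intersecting {i j t : ℕ} {𝓐 : Finset (Finset ℕ)} (hij : i < j)
    (hint : IntersectingT t 𝓐) : IntersectingT t (shiftFam i j 𝓐) := by
  have hne : i ≠ j := ne_of_lt hij
  intro X' hX' Y' hY'
  rcases Finset.mem_image.1 hX' with ⟨X, hX, rfl⟩
  rcases Finset.mem_image.1 hY' with ⟨Y, hY, rfl⟩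
  by_cases hMX : Mv i j 𝓐 X <;> by_cases hMY : Mv i j 𝓐 Y
  · rw [shiftSet_pos hMX, shiftSet_pos hMY, tau_inter,
      card_tau (Finset.mem_inter.2 ⟨hMX.1, hMY.1⟩) (fun h => hMX.2.1 (Finset.mem_inter.1 h).1)]
    exact hint X hX Y hY
  · -- X moves, Y does not
    rw [shiftSet_pos hMX, shiftSet_neg hMY]
    by_cases hjY : j ∈ Y
    · by_cases hiY : i ∈ Y
      · rw [tau_inter_right hiY,
          card_tau (Finset.mem_inter.2 ⟨hMX.1, hjY⟩) (fun h => hMX.2.1 (Finset.mem_inter.1 h).1)]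
        exact hint X hX Y hY
      · -- j ∈ Y, i ∉ Y, so tau Y ∈ 𝓐
        have hTY : tau i j Y ∈ 𝓐 := by
          by_contra hc
          exact hMY ⟨hjY, hiY, hc⟩
        have e1 : tau i j X ∩ Y = (X ∩ Y).erase j := tau_inter_erase hiY
        have e2 : X ∩ tau i j Y = (X ∩ Y).erase j := by
          rw [Finset.inter_comm, tau_inter_erase hMX.2.1, Finset.inter_comm Y X]
        rw [e1, ← e2]
        exact hint X hX _ hTY
    · calc t ≤ (X ∩ Y).card := hint X hX Y hY
        _ ≤ (tau i j X ∩ Y).card := Finset.card_le_card (inter_subset_tau_inter hjY)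
  · -- Y moves, X does not (symmetric)
    rw [shiftSet_neg hMX, shiftSet_pos hMY]
    rw [Finset.inter_comm]
    by_cases hjX : j ∈ X
    · by_cases hiX : i ∈ X
      · rw [tau_inter_right hiX,
          card_tau (Finset.mem_inter.2 ⟨hMY.1, hjX⟩) (fun h => hMY.2.1 (Finset.mem_inter.1 h).1)]
        rw [Finset.inter_comm]
        exact hint X hX Y hY
      · have hTX : tau i j X ∈ 𝓐 := by
          by_contra hc
          exact hMX ⟨hjX, hiX, hc⟩
        have e1 : tau i j Y ∩ X = (Y ∩ X).erase j := tau_inter_erase hiX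
        have e2 : Y ∩ tau i j X = (Y ∩ X).erase j := by
          rw [Finset.inter_comm, tau_inter_erase hMY.2.1, Finset.inter_comm X Y]
        rw [e1, ← e2]
        exact hint Y hY _ hTX
    · calc t ≤ (Y ∩ X).card := hint Y hY X hX
        _ ≤ (tau i j Y ∩ X).card := Finset.card_le_card (inter_subset_tau_inter hjX)
  · rw [shiftSet_neg hMX, shiftSet_neg hMY]
    exact hint X hX Y hY

/-- number of (k-1)-subsets of `[n]` inside `S`. -/
lemma card_filter_subset {n m : ℕ} {S : Finset ℕ} (hS : S ⊆ Iv n) :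
    ((KSets n m).filter fun E => E ⊆ S).card = S.card.choose m := by
  rw [show (KSets n m).filter (fun E => E ⊆ S) = S.powersetCard m by
    ext E
    simp only [Finset.mem_filter, KSets, Finset.mem_powersetCard]
    exact ⟨fun h => ⟨h.2, h.1.2⟩, fun h => ⟨⟨h.1.trans hS, h.2⟩, h.1⟩⟩]
  exact Finset.card_powersetCard m S

lemma co2_eq {n k : ℕ} {F : Finset (Finset ℕ)} (hF : F ⊆ KSets n k) :
    co2 n k F = ∑ p ∈ F ×ˢ F, ((p.1 ∩ p.2).card.choose (k - 1)) := by
  rw [co2, Finset.sum_product]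
  have step1 : ∀ E, codeg F E ^ 2
      = ∑ A ∈ F, ∑ B ∈ F, ((if E ⊆ A then 1 else 0) * (if E ⊆ B then 1 else 0) : ℕ) := by
    intro E
    rw [codeg, Finset.card_filter, sq, Finset.sum_mul_sum]
  simp only [step1]
  rw [Finset.sum_comm]
  refine Finset.sum_congr rfl fun A hA => ?_
  rw [Finset.sum_comm]
  refine Finset.sum_congr rfl fun B hB => ?_
  have hAB : A ∩ B ⊆ Iv n :=
    (Finset.inter_subset_left).trans (mem_KSets.1 (hF hA)).1
  rw [← card_filter_subset hAB, Finset.card_filter]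
  refine Finset.sum_congr rfl fun E _ => ?_
  by_cases hEA : E ⊆ A <;> by_cases hEB : E ⊆ B <;>
    simp [hEA, hEB, Finset.subset_inter_iff]

/-- the pair-redirect map -/
def psi (i j : ℕ) (𝓐 : Finset (Finset ℕ)) (X Y : Finset ℕ) : Finset ℕ :=
  if Mv i j 𝓐 X ∨ (cnd i j X ∧ Mv i j 𝓐 Y) then tau i j X else X

lemma psi_card_le {i j : ℕ} {𝓐 : Finset (Finset ℕ)} (A B : Finset ℕ) :
    (A ∩ B).card ≤ (psi i j 𝓐 A B ∩ psi i j 𝓐 B A).card := by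
  by_cases hCA : Mv i j 𝓐 A ∨ (cnd i j A ∧ Mv i j 𝓐 B) <;>
    by_cases hCB : Mv i j 𝓐 B ∨ (cnd i j B ∧ Mv i j 𝓐 A)
  · have hcA : cnd i j A := hCA.elim (fun h => ⟨h.1, h.2.1⟩) And.left
    have hcB : cnd i j B := hCB.elim (fun h => ⟨h.1, h.2.1⟩) And.left
    rw [psi, if_pos hCA, psi, if_pos hCB, tau_inter,
      card_tau (Finset.mem_inter.2 ⟨hcA.1, hcB.1⟩) (fun h => hcA.2 (Finset.mem_inter.1 h).1)]
  · -- A moves, B does not : here ¬ cnd B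
    rw [psi, if_pos hCA, psi, if_neg hCB]
    have hcA : cnd i j A := hCA.elim (fun h => ⟨h.1, h.2.1⟩) And.left
    have hncB : ¬ cnd i j B := by
      intro hcB
      rcases Classical.em (insert i (B.erase j) ∈ 𝓐) with hTB | hTB
      · rcases hCA with hMA | ⟨_, hMB⟩
        · exact hCB (Or.inr ⟨hcB, hMA⟩)
        · exact hMB.2.2 hTB
      · exact hCB (Or.inl ⟨hcB.1, hcB.2, hTB⟩)
    by_cases hjB : j ∈ B
    · have hiB : i ∈ B := by
        by_contra hiB; exact hncB ⟨hjB, hiB⟩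
      rw [tau_inter_right hiB,
        card_tau (Finset.mem_inter.2 ⟨hcA.1, hjB⟩) (fun h => hcA.2 (Finset.mem_inter.1 h).1)]
    · exact Finset.card_le_card (inter_subset_tau_inter hjB)
  · -- B moves, A does not
    rw [psi, if_neg hCA, psi, if_pos hCB]
    have hcB : cnd i j B := hCB.elim (fun h => ⟨h.1, h.2.1⟩) And.left
    have hncA : ¬ cnd i j A := by
      intro hcA
      rcases Classical.em (insert i (A.erase j) ∈ 𝓐) with hTA | hTA
      · rcases hCB with hMB | ⟨_, hMA⟩
        · exact hCA (Or.inr ⟨hcA, hMB⟩)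
        · exact hMA.2.2 hTA
      · exact hCA (Or.inl ⟨hcA.1, hcA.2, hTA⟩)
    rw [Finset.inter_comm A B, Finset.inter_comm A (tau i j B)]
    by_cases hjA : j ∈ A
    · have hiA : i ∈ A := by
        by_contra hiA; exact hncA ⟨hjA, hiA⟩
      rw [tau_inter_right hiA,
        card_tau (Finset.mem_inter.2 ⟨hcB.1, hjA⟩) (fun h => hcB.2 (Finset.mem_inter.1 h).1)]
    · exact Finset.card_le_card (inter_subset_tau_inter hjA)
  · rw [psi, if_neg hCA, psi, if_neg hCB]

lemma psi_mem {i j : ℕ} (hij : i ≠ j) {𝓐 : Finset (Finset ℕ)} {A : Finset ℕ}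
    (hA : A ∈ 𝓐) (B : Finset ℕ) : psi i j 𝓐 A B ∈ shiftFam i j 𝓐 := by
  by_cases hC : Mv i j 𝓐 A ∨ (cnd i j A ∧ Mv i j 𝓐 B)
  · rw [psi, if_pos hC]
    rcases Classical.em (Mv i j 𝓐 A) with hMA | hMA
    · exact Finset.mem_image.2 ⟨A, hA, shiftSet_pos hMA⟩
    · have hcA : cnd i j A := hC.elim (fun h => ⟨h.1, h.2.1⟩) And.left
      have hTA : tau i j A ∈ 𝓐 := by
        by_contra hc; exact hMA ⟨hcA.1, hcA.2, hc⟩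
      refine Finset.mem_image.2 ⟨tau i j A, hTA, shiftSet_neg ?_⟩
      intro hM
      exact notMem_tau_self hij A hM.1
  · rw [psi, if_neg hC]
    refine Finset.mem_image.2 ⟨A, hA, shiftSet_neg ?_⟩
    intro hM
    exact hC (Or.inl hM)

/-- key contradiction helper -/
lemma tau_pair_card {n k i j : ℕ} (hk : 1 ≤ k) {𝓐 : Finset (Finset ℕ)}
    (h𝓐 : 𝓐 ⊆ KSets n k) {A B : Finset ℕ} (hA : A ∈ 𝓐) (hB : B ∈ 𝓐)
    (hjA : j ∈ A) (hjB : j ∈ B) (hiB : i ∉ B)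
    (hcard : k - 1 ≤ (tau i j A ∩ B).card) : A = B := by
  have hAk : A.card = k := (mem_KSets.1 (h𝓐 hA)).2
  have hBk : B.card = k := (mem_KSets.1 (h𝓐 hB)).2
  rw [tau_inter_erase hiB, Finset.card_erase_of_mem (Finset.mem_inter.2 ⟨hjA, hjB⟩)] at hcard
  have h1 : 1 ≤ (A ∩ B).card := Finset.card_pos.2 ⟨j, Finset.mem_inter.2 ⟨hjA, hjB⟩⟩
  have h2 : (A ∩ B).card ≤ k := hAk ▸ Finset.card_le_card Finset.inter_subset_left
  have hEq : (A ∩ B).card = k := by omega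
  have e1 : A ∩ B = A :=
    Finset.eq_of_subset_of_card_le Finset.inter_subset_left (by omega)
  have e2 : A ∩ B = B :=
    Finset.eq_of_subset_of_card_le Finset.inter_subset_right (by omega)
  rw [← e1, e2]

lemma psi_pos {i j : ℕ} {𝓐 : Finset (Finset ℕ)} {X Y : Finset ℕ}
    (h : Mv i j 𝓐 X ∨ (cnd i j X ∧ Mv i j 𝓐 Y)) : psi i j 𝓐 X Y = tau i j X := if_pos h

lemma psi_neg {i j : ℕ} {𝓐 : Finset (Finset ℕ)} {X Y : Finset ℕ}
    (h : ¬ (Mv i j 𝓐 X ∨ (cnd i j X ∧ Mv i j 𝓐 Y))) : psi i j 𝓐 X Y = X := if_neg h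

lemma cnd_of_C {i j : ℕ} {𝓐 : Finset (Finset ℕ)} {X Y : Finset ℕ}
    (h : Mv i j 𝓐 X ∨ (cnd i j X ∧ Mv i j 𝓐 Y)) : cnd i j X :=
  h.elim (fun m => ⟨m.1, m.2.1⟩) And.left

lemma Mv_not_tau {i j : ℕ} {𝓐 : Finset (Finset ℕ)} {X : Finset ℕ}
    (h : Mv i j 𝓐 X) : tau i j X ∉ 𝓐 := h.2.2

/-- second-coordinate injectivity (after first coordinates agree) -/
lemma snd_inj {n k i j : ℕ} (hk : 1 ≤ k) {𝓐 : Finset (Finset ℕ)}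
    (h𝓐 : 𝓐 ⊆ KSets n k) {A B B' : Finset ℕ}
    (hA : A ∈ 𝓐) (hB : B ∈ 𝓐) (hB' : B' ∈ 𝓐)
    (hPp : k - 1 ≤ (A ∩ B).card) (hPq : k - 1 ≤ (A ∩ B').card)
    (e2 : psi i j 𝓐 B A = psi i j 𝓐 B' A) : B = B' := by
  by_cases cB : Mv i j 𝓐 B ∨ (cnd i j B ∧ Mv i j 𝓐 A) <;>
    by_cases cB' : Mv i j 𝓐 B' ∨ (cnd i j B' ∧ Mv i j 𝓐 A)
  · rw [psi_pos cB, psi_pos cB'] at e2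
    exact tau_inj (cnd_of_C cB).1 (cnd_of_C cB).2 (cnd_of_C cB').1 (cnd_of_C cB').2 e2
  · rw [psi_pos cB, psi_neg cB'] at e2
    exfalso
    rcases cB with hMB | ⟨hcB, hMA⟩
    · exact Mv_not_tau hMB (e2 ▸ hB')
    · rw [← e2, Finset.inter_comm] at hPq
      have hBA : B = A := tau_pair_card hk h𝓐 hB hA hcB.1 hMA.1 hMA.2.1 hPq
      have hMB : Mv i j 𝓐 B := hBA ▸ hMA
      exact Mv_not_tau hMB (e2 ▸ hB')
  · rw [psi_neg cB, psi_pos cB'] at e2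
    exfalso
    rcases cB' with hMB' | ⟨hcB', hMA⟩
    · exact Mv_not_tau hMB' (e2 ▸ hB)
    · rw [e2, Finset.inter_comm] at hPp
      have hBA : B' = A := tau_pair_card hk h𝓐 hB' hA hcB'.1 hMA.1 hMA.2.1 hPp
      have hMB' : Mv i j 𝓐 B' := hBA ▸ hMA
      exact Mv_not_tau hMB' (e2 ▸ hB)
  · rw [psi_neg cB, psi_neg cB'] at e2
    exact e2

lemma psi_injOn {n k i j : ℕ} (hk : 1 ≤ k) (hij : i < j) {𝓐 : Finset (Finset ℕ)}
    (h𝓐 : 𝓐 ⊆ KSets n k) {A B A' B' : Finset ℕ}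
    (hA : A ∈ 𝓐) (hB : B ∈ 𝓐) (hA' : A' ∈ 𝓐) (hB' : B' ∈ 𝓐)
    (hPp : k - 1 ≤ (A ∩ B).card) (hPq : k - 1 ≤ (A' ∩ B').card)
    (e1 : psi i j 𝓐 A B = psi i j 𝓐 A' B') (e2 : psi i j 𝓐 B A = psi i j 𝓐 B' A') :
    A = A' ∧ B = B' := by
  by_cases cA : Mv i j 𝓐 A ∨ (cnd i j A ∧ Mv i j 𝓐 B) <;>
    by_cases cA' : Mv i j 𝓐 A' ∨ (cnd i j A' ∧ Mv i j 𝓐 B')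
  · rw [psi_pos cA, psi_pos cA'] at e1
    have hAA : A = A' :=
      tau_inj (cnd_of_C cA).1 (cnd_of_C cA).2 (cnd_of_C cA').1 (cnd_of_C cA').2 e1
    subst hAA
    exact ⟨rfl, snd_inj hk h𝓐 hA hB hB' hPp hPq e2⟩
  · -- first moves, second does not
    rw [psi_pos cA, psi_neg cA'] at e1
    exfalso
    rcases cA with hMA | ⟨hcA, hMB⟩
    · exact Mv_not_tau hMA (e1 ▸ hA')
    · have eψB : psi i j 𝓐 B A = tau i j B := psi_pos (Or.inl hMB)
      rw [eψB] at e2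
      by_cases cB' : Mv i j 𝓐 B' ∨ (cnd i j B' ∧ Mv i j 𝓐 A')
      · rw [psi_pos cB'] at e2
        have hBB : B = B' := tau_inj hMB.1 hMB.2.1 (cnd_of_C cB').1 (cnd_of_C cB').2 e2
        rw [← e1, ← hBB] at hPq
        have hAB : A = B := tau_pair_card hk h𝓐 hA hB hcA.1 hMB.1 hMB.2.1 hPq
        have hMA : Mv i j 𝓐 A := hAB ▸ hMB
        exact Mv_not_tau hMA (e1 ▸ hA')
      · rw [psi_neg cB'] at e2
        exact Mv_not_tau hMB (e2 ▸ hB')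
  · -- second moves, first does not
    rw [psi_neg cA, psi_pos cA'] at e1
    exfalso
    rcases cA' with hMA' | ⟨hcA', hMB'⟩
    · exact Mv_not_tau hMA' (e1 ▸ hA)
    · have eψB' : psi i j 𝓐 B' A' = tau i j B' := psi_pos (Or.inl hMB')
      rw [eψB'] at e2
      by_cases cB : Mv i j 𝓐 B ∨ (cnd i j B ∧ Mv i j 𝓐 A)
      · rw [psi_pos cB] at e2
        have hBB : B = B' := tau_inj (cnd_of_C cB).1 (cnd_of_C cB).2 hMB'.1 hMB'.2.1 e2
        rw [e1, hBB] at hPp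
        have hAB : A' = B' := tau_pair_card hk h𝓐 hA' hB' hcA'.1 hMB'.1 hMB'.2.1 hPp
        have hMA' : Mv i j 𝓐 A' := hAB ▸ hMB'
        exact Mv_not_tau hMA' (e1 ▸ hA)
      · rw [psi_neg cB] at e2
        exact Mv_not_tau hMB' (e2 ▸ hB)
  · rw [psi_neg cA, psi_neg cA'] at e1
    subst e1
    exact ⟨rfl, snd_inj hk h𝓐 hA hB hB' hPp hPq e2⟩

lemma co2_shift_le {n k i j : ℕ} (hk : 1 ≤ k) (h1 : 1 ≤ i) (hij : i < j) (hjn : j ≤ n)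
    {𝓐 : Finset (Finset ℕ)} (h𝓐 : 𝓐 ⊆ KSets n k) :
    co2 n k 𝓐 ≤ co2 n k (shiftFam i j 𝓐) := by
  classical
  rw [co2_eq h𝓐, co2_eq (shiftFam_subset_KSets h𝓐 h1 hij hjn)]
  set w : Finset ℕ × Finset ℕ → ℕ := fun p => (p.1 ∩ p.2).card.choose (k - 1) with hw
  set P := (𝓐 ×ˢ 𝓐).filter (fun p => k - 1 ≤ (p.1 ∩ p.2).card) with hP
  have step1 : ∑ p ∈ 𝓐 ×ˢ 𝓐, w p = ∑ p ∈ P, w p := by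
    refine (Finset.sum_subset (Finset.filter_subset _ _) ?_).symm
    intro p hp hnp
    have hlt : (p.1 ∩ p.2).card < k - 1 := by
      by_contra hc
      exact hnp (Finset.mem_filter.2 ⟨hp, le_of_not_gt hc⟩)
    exact Nat.choose_eq_zero_of_lt hlt
  rw [step1]
  set Φ : Finset ℕ × Finset ℕ → Finset ℕ × Finset ℕ :=
    fun p => (psi i j 𝓐 p.1 p.2, psi i j 𝓐 p.2 p.1) with hΦ
  calc ∑ p ∈ P, w p ≤ ∑ p ∈ P, w (Φ p) :=
        Finset.sum_le_sum fun p _ => Nat.choose_le_choose _ (psi_card_le p.1 p.2)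
    _ = ∑ q ∈ P.image Φ, w q := by
        refine (Finset.sum_image ?_).symm
        intro p hp q hq h
        have hp' := Finset.mem_filter.1 hp
        have hq' := Finset.mem_filter.1 hq
        have hp1 := (Finset.mem_product.1 hp'.1).1
        have hp2 := (Finset.mem_product.1 hp'.1).2
        have hq1 := (Finset.mem_product.1 hq'.1).1
        have hq2 := (Finset.mem_product.1 hq'.1).2
        have hr := psi_injOn hk hij h𝓐 hp1 hp2 hq1 hq2 hp'.2 hq'.2
          (congrArg Prod.fst h) (congrArg Prod.snd h)
        exact Prod.ext hr.1 hr.2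
    _ ≤ ∑ q ∈ shiftFam i j 𝓐 ×ˢ shiftFam i j 𝓐, w q := by
        refine Finset.sum_le_sum_of_subset ?_
        intro q hq
        rcases Finset.mem_image.1 hq with ⟨p, hp, rfl⟩
        have hp' := Finset.mem_filter.1 hp
        have hp1 := (Finset.mem_product.1 hp'.1).1
        have hp2 := (Finset.mem_product.1 hp'.1).2
        exact Finset.mem_product.2
          ⟨psi_mem (ne_of_lt hij) hp1 _, psi_mem (ne_of_lt hij) hp2 _⟩

/-- measure used for termination of the compression process -/
def mu (F : Finset (Finset ℕ)) : ℕ := ∑ A ∈ F, ∑ x ∈ A, x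

lemma mu_shift_lt {i j : ℕ} (hij : i < j) {F : Finset (Finset ℕ)}
    (hne : shiftFam i j F ≠ F) : mu (shiftFam i j F) < mu F := by
  classical
  have himg : mu (shiftFam i j F) = ∑ A ∈ F, ∑ x ∈ shiftSet i j F A, x :=
    Finset.sum_image shiftSet_injOn
  rw [himg, mu]
  have key : ∀ A, Mv i j F A → ∑ x ∈ tau i j A, x < ∑ x ∈ A, x := by
    intro A hM
    have hiA : i ∉ A.erase j := fun h => hM.2.1 (Finset.mem_of_mem_erase h)
    rw [tau, Finset.sum_insert hiA]
    have hsum := Finset.sum_erase_add A (fun x => x) hM.1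
    omega
  have hex : ∃ A ∈ F, shiftSet i j F A ≠ A := by
    by_contra hc
    push_neg at hc
    apply hne
    rw [shiftFam, Finset.image_congr (fun A hA => hc A hA)]
    exact Finset.image_id
  rcases hex with ⟨A0, hA0, hA0ne⟩
  have hM0 : Mv i j F A0 := by
    by_contra hM
    exact hA0ne (shiftSet_neg hM)
  refine Finset.sum_lt_sum (fun A _ => ?_) ⟨A0, hA0, ?_⟩
  · by_cases hM : Mv i j F A
    · rw [shiftSet_pos hM]; exact le_of_lt (key A hM)
    · rw [shiftSet_neg hM]
  · rw [shiftSet_pos hM0]; exact key A0 hM0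

lemma exists_compressed {n k t : ℕ} (hk : 1 ≤ k) :
    ∀ m : ℕ, ∀ F : Finset (Finset ℕ), F ⊆ KSets n k → IntersectingT t F → mu F ≤ m →
      ∃ B, B ⊆ KSets n k ∧ IntersectingT t B ∧ LeftCompressed n B ∧ co2 n k F ≤ co2 n k B := by
  intro m
  induction m with
  | zero =>
    intro F hF hint hmu
    by_cases hLC : LeftCompressed n F
    · exact ⟨F, hF, hint, hLC, le_rfl⟩
    · rw [LeftCompressed] at hLC
      push_neg at hLC
      obtain ⟨i, j, h1, hij, hjn, hne⟩ := hLC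
      have hlt := mu_shift_lt hij hne
      omega
  | succ m ih =>
    intro F hF hint hmu
    by_cases hLC : LeftCompressed n F
    · exact ⟨F, hF, hint, hLC, le_rfl⟩
    · rw [LeftCompressed] at hLC
      push_neg at hLC
      obtain ⟨i, j, h1, hij, hjn, hne⟩ := hLC
      have hlt := mu_shift_lt hij hne
      obtain ⟨B, hB1, hB2, hB3, hB4⟩ :=
        ih (shiftFam i j F) (shiftFam_subset_KSets hF h1 hij hjn)
          (shiftFam_intersecting hij hint) (by omega)
      exact ⟨B, hB1, hB2, hB3, le_trans (co2_shift_le hk h1 hij hjn hF) hB4⟩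

end Stmt6Aux

/-- **Shifting does not decrease the codegree squared sum; there is a left-compressed
`t`-intersecting family with at least as large codegree squared sum.** -/
theorem stmt_6 (n k t : ℕ) (ht : 0 < t) (hk : 0 < k) (hkn : k ≤ n)
    (𝓐 : Finset (Finset ℕ)) (h𝓐 : 𝓐 ⊆ KSets n k) (hint : IntersectingT t 𝓐) :
    (∀ i j : ℕ, 1 ≤ i → i < j → j ≤ n → co2 n k 𝓐 ≤ co2 n k (shiftFam i j 𝓐)) ∧
      ∃ 𝓑 : Finset (Finset ℕ), 𝓑 ⊆ KSets n k ∧ IntersectingT t 𝓑 ∧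
        LeftCompressed n 𝓑 ∧ co2 n k 𝓐 ≤ co2 n k 𝓑 := by
  constructor
  · intro i j h1 hij hjn
    exact Stmt6Aux.co2_shift_le hk h1 hij hjn h𝓐
  · exact Stmt6Aux.exists_compressed hk (Stmt6Aux.mu 𝓐) 𝓐 h𝓐 hint le_rfl
end

section
/- Let t, k, n be positive integers with t ≤ k ≤ n, and let 𝓕 = {F ∈ C([n],k) : [t] ⊆ F} be the full t-star. Then co2(𝓕) = C(n−t, k−t−1)·(n−k+1)² + t·C(n−t, k−t). -/
open Finset

lemma Iv_card (n : ℕ) : (Iv n).card = n := by simp [Iv]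

lemma Iv_mono {t n : ℕ} (h : t ≤ n) : Iv t ⊆ Iv n := Finset.Icc_subset_Icc le_rfl h

lemma Iv_sdiff {t n : ℕ} : Iv n \ Iv t = Finset.Icc (t+1) n := by
  ext x; simp only [Iv, Finset.mem_sdiff, Finset.mem_Icc]; omega

lemma mem_KSets {n k : ℕ} {A : Finset ℕ} : A ∈ KSets n k ↔ A ⊆ Iv n ∧ A.card = k := by
  simp [KSets, Finset.mem_powersetCard]

-- codeg when Iv t ⊆ E
lemma codeg_one {t k n : ℕ} (ht : 0 < t) (htk : t ≤ k) (hkn : k ≤ n)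
    {E : Finset ℕ} (hE : E ∈ KSets n (k-1)) (hsub : Iv t ⊆ E) :
    codeg ((KSets n k).filter fun F => Iv t ⊆ F) E = n - k + 1 := by
  obtain ⟨hEn, hEc⟩ := mem_KSets.mp hE
  rw [codeg, Finset.filter_filter]
  have hset : ((KSets n k).filter fun F => Iv t ⊆ F ∧ E ⊆ F)
      = (Iv n \ E).image (fun x => insert x E) := by
    ext F
    simp only [Finset.mem_filter, mem_KSets, Finset.mem_image, Finset.mem_sdiff]
    constructor
    · rintro ⟨⟨hFn, hFc⟩, -, hEF⟩
      have hcd : (F \ E).card = 1 := by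
        rw [Finset.card_sdiff_of_subset hEF, hFc, hEc]; omega
      obtain ⟨x, hx⟩ := Finset.card_eq_one.mp hcd
      refine ⟨x, ⟨hFn ?_, ?_⟩, ?_⟩
      · have : x ∈ F \ E := hx ▸ Finset.mem_singleton_self x
        exact (Finset.mem_sdiff.mp this).1
      · have : x ∈ F \ E := hx ▸ Finset.mem_singleton_self x
        exact (Finset.mem_sdiff.mp this).2
      · have := Finset.sdiff_union_of_subset hEF
        rw [hx] at this
        rw [← this]; exact Finset.insert_eq x E
    · rintro ⟨x, ⟨hxn, hxE⟩, rfl⟩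
      refine ⟨⟨Finset.insert_subset hxn hEn, ?_⟩, hsub.trans (Finset.subset_insert _ _),
        Finset.subset_insert _ _⟩
      rw [Finset.card_insert_of_notMem hxE, hEc]; omega
  rw [hset, Finset.card_image_of_injOn, Finset.card_sdiff_of_subset hEn, Iv_card, hEc]
  · omega
  · intro x hx y hy hxy
    rw [Finset.mem_coe, Finset.mem_sdiff] at hx hy
    have hxy' : insert x E = insert y E := hxy
    have : x ∈ insert y E := hxy' ▸ Finset.mem_insert_self x E
    rcases Finset.mem_insert.mp this with h | h
    · exact h
    · exact absurd h hx.2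

lemma codeg_single {t k n : ℕ} (ht : 0 < t) (htk : t ≤ k) (hkn : k ≤ n)
    {E : Finset ℕ} (hE : E ∈ KSets n (k-1)) (h1 : (Iv t \ E).card = 1) :
    codeg ((KSets n k).filter fun F => Iv t ⊆ F) E = 1 := by
  obtain ⟨hEn, hEc⟩ := mem_KSets.mp hE
  rw [codeg, Finset.filter_filter]
  have hcu : (Iv t ∪ E).card = k := by
    have := Finset.card_sdiff_add_card_eq_card (Finset.subset_union_right (s₁ := Iv t) (s₂ := E))
    rw [Finset.union_sdiff_right] at this
    omega
  have hset : ((KSets n k).filter fun F => Iv t ⊆ F ∧ E ⊆ F) = {Iv t ∪ E} := by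
    ext F
    simp only [Finset.mem_filter, mem_KSets, Finset.mem_singleton]
    constructor
    · rintro ⟨⟨hFn, hFc⟩, htF, hEF⟩
      have hsub : Iv t ∪ E ⊆ F := Finset.union_subset htF hEF
      exact (Finset.eq_of_subset_of_card_le hsub (by omega)).symm
    · rintro rfl
      exact ⟨⟨Finset.union_subset (Iv_mono (le_trans htk hkn)) hEn, hcu⟩,
        Finset.subset_union_left, Finset.subset_union_right⟩
  rw [hset, Finset.card_singleton]

lemma codeg_zero {t k n : ℕ} (ht : 0 < t) (htk : t ≤ k) (hkn : k ≤ n)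
    {E : Finset ℕ} (hE : E ∈ KSets n (k-1)) (h2 : 2 ≤ (Iv t \ E).card) :
    codeg ((KSets n k).filter fun F => Iv t ⊆ F) E = 0 := by
  obtain ⟨hEn, hEc⟩ := mem_KSets.mp hE
  rw [codeg, Finset.filter_filter, Finset.card_eq_zero, Finset.filter_eq_empty_iff]
  rintro F hF ⟨htF, hEF⟩
  obtain ⟨hFn, hFc⟩ := mem_KSets.mp hF
  have hsub : Iv t ∪ E ⊆ F := Finset.union_subset htF hEF
  have hle := Finset.card_le_card hsub
  have := Finset.card_sdiff_add_card_eq_card (Finset.subset_union_right (s₁ := Iv t) (s₂ := E))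
  rw [Finset.union_sdiff_right] at this
  omega

lemma S1_card {t k n : ℕ} (ht : 0 < t) (htk : t + 1 ≤ k) (hkn : k ≤ n) :
    ((KSets n (k-1)).filter fun E => Iv t ⊆ E).card = (n - t).choose (k - 1 - t) := by
  have hIcc : (Finset.Icc (t+1) n).card = n - t := by rw [Nat.card_Icc]; omega
  rw [← hIcc, ← Finset.card_powersetCard (k-1-t) (Finset.Icc (t+1) n)]
  apply Finset.card_bij' (fun E _ => E \ Iv t) (fun A _ => A ∪ Iv t)
  · intro E hE
    simp only [Finset.mem_filter, mem_KSets] at hE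
    obtain ⟨⟨hEn, hEc⟩, hsub⟩ := hE
    rw [Finset.mem_powersetCard]
    constructor
    · rw [← Iv_sdiff]; exact Finset.sdiff_subset_sdiff hEn le_rfl
    · rw [Finset.card_sdiff_of_subset hsub, hEc, Iv_card]
  · intro A hA
    rw [Finset.mem_powersetCard] at hA
    obtain ⟨hAsub, hAc⟩ := hA
    have hdisj : Disjoint A (Iv t) := by
      rw [Finset.disjoint_left]
      intro a haA haI
      have h1 := Finset.mem_Icc.mp (hAsub haA)
      have h2 := Finset.mem_Icc.mp haI
      omega
    simp only [Finset.mem_filter, mem_KSets]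
    refine ⟨⟨Finset.union_subset (hAsub.trans ?_) (Iv_mono (by omega)), ?_⟩,
      Finset.subset_union_right⟩
    · intro x hx; have := Finset.mem_Icc.mp hx; simp only [Iv, Finset.mem_Icc]; omega
    · rw [Finset.card_union_of_disjoint hdisj, hAc, Iv_card]
      have : t ≤ n := by omega
      have : k - 1 - t ≤ n - t := by omega
      omega
  · intro E hE
    simp only [Finset.mem_filter] at hE
    exact Finset.sdiff_union_of_subset hE.2
  · intro A hA
    rw [Finset.mem_powersetCard] at hA
    rw [Finset.union_sdiff_right]
    apply Finset.sdiff_eq_self_of_disjoint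
    rw [Finset.disjoint_left]
    intro a haA haI
    have h1 := Finset.mem_Icc.mp (hA.1 haA)
    have h2 := Finset.mem_Icc.mp haI
    omega

lemma S1_empty {t n : ℕ} (ht : 0 < t) :
    ((KSets n (t-1)).filter fun E => Iv t ⊆ E) = ∅ := by
  rw [Finset.filter_eq_empty_iff]
  intro E hE hsub
  obtain ⟨hEn, hEc⟩ := mem_KSets.mp hE
  have := Finset.card_le_card hsub
  rw [Iv_card, hEc] at this
  omega

lemma S2_card {t k n : ℕ} (ht : 0 < t) (htk : t ≤ k) (hkn : k ≤ n) :
    ((KSets n (k-1)).filter fun E => (Iv t \ E).card = 1).card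
      = t * (n - t).choose (k - t) := by
  have hIcc : (Finset.Icc (t+1) n).card = n - t := by rw [Nat.card_Icc]; omega
  have hcard : ((Iv t) ×ˢ (Finset.Icc (t+1) n).powersetCard (k-t)).card
      = t * (n - t).choose (k - t) := by
    rw [Finset.card_product, Iv_card, Finset.card_powersetCard, hIcc]
  rw [← hcard]
  refine Finset.card_bij' (fun E hE => ((Iv t \ E).min' (Finset.card_pos.mp (by
      simp only [Finset.mem_filter] at hE; omega)), E \ Iv t))
    (fun p _ => ((Iv t).erase p.1) ∪ p.2) ?hi ?hj ?linv ?rinv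
  case hi =>
    intro E hE
    simp only [Finset.mem_filter, mem_KSets] at hE
    obtain ⟨⟨hEn, hEc⟩, h1⟩ := hE
    rw [Finset.mem_product]
    dsimp only
    constructor
    · have := Finset.min'_mem (Iv t \ E) (Finset.card_pos.mp (by omega))
      exact (Finset.mem_sdiff.mp this).1
    · rw [Finset.mem_powersetCard]
      constructor
      · rw [← Iv_sdiff]; exact Finset.sdiff_subset_sdiff hEn le_rfl
      · have hi2 := Finset.card_inter_add_card_sdiff (Iv t) E
        have hi := Finset.card_inter_add_card_sdiff E (Iv t)
        rw [Finset.inter_comm] at hi2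
        rw [Iv_card] at hi2
        omega
  case hj =>
    rintro ⟨a, A⟩ hp
    rw [Finset.mem_product, Finset.mem_powersetCard] at hp
    obtain ⟨haI, hAsub, hAc⟩ := hp
    have haA : a ∉ A := by
      intro h
      have h1 := Finset.mem_Icc.mp (hAsub h)
      have h2 := Finset.mem_Icc.mp haI
      omega
    have hdisj : Disjoint ((Iv t).erase a) A := by
      rw [Finset.disjoint_left]
      intro x hx hxA
      have h1 := Finset.mem_Icc.mp (hAsub hxA)
      have h2 := Finset.mem_Icc.mp (Finset.mem_of_mem_erase hx)
      omega
    have hkey : Iv t \ ((Iv t).erase a ∪ A) = {a} := by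
      ext x
      simp only [Finset.mem_sdiff, Finset.mem_union, Finset.mem_erase, Finset.mem_singleton,
        not_or, not_and]
      constructor
      · rintro ⟨hxI, hx1, hx2⟩
        by_contra hne
        exact (hx1 hne) hxI
      · rintro rfl
        exact ⟨haI, fun h => absurd rfl h, haA⟩
    simp only [Finset.mem_filter, mem_KSets]
    refine ⟨⟨Finset.union_subset ((Finset.erase_subset _ _).trans (Iv_mono (by omega)))
      (fun x hx => by have := Finset.mem_Icc.mp (hAsub hx); simp only [Iv, Finset.mem_Icc]; omega),
      ?_⟩, ?_⟩
    · rw [Finset.card_union_of_disjoint hdisj, Finset.card_erase_of_mem haI, Iv_card, hAc]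
      have : k - t ≤ n - t := by omega
      omega
    · rw [hkey, Finset.card_singleton]
  case linv =>
    intro E hE
    dsimp only
    simp only [Finset.mem_filter, mem_KSets] at hE
    obtain ⟨⟨hEn, hEc⟩, h1⟩ := hE
    obtain ⟨a, ha⟩ := Finset.card_eq_one.mp h1
    simp only [ha, Finset.min'_singleton]
    have haI : a ∈ Iv t := (Finset.mem_sdiff.mp (ha ▸ Finset.mem_singleton_self a)).1
    have haE : a ∉ E := (Finset.mem_sdiff.mp (ha ▸ Finset.mem_singleton_self a)).2
    have hax : ∀ y, y ∈ Iv t → y ∉ E → y = a := by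
      intro y hy hyE
      have : y ∈ Iv t \ E := Finset.mem_sdiff.mpr ⟨hy, hyE⟩
      rw [ha, Finset.mem_singleton] at this
      exact this
    ext x
    simp only [Finset.mem_union, Finset.mem_erase, Finset.mem_sdiff]
    constructor
    · rintro (⟨hne, hxI⟩ | ⟨hxE, -⟩)
      · by_contra hxE
        exact hne (hax x hxI hxE)
      · exact hxE
    · intro hxE
      by_cases hxI : x ∈ Iv t
      · exact Or.inl ⟨fun h => haE (h ▸ hxE), hxI⟩
      · exact Or.inr ⟨hxE, hxI⟩
  case rinv =>
    rintro ⟨a, A⟩ hp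
    dsimp only
    rw [Finset.mem_product, Finset.mem_powersetCard] at hp
    obtain ⟨haI, hAsub, hAc⟩ := hp
    have haA : a ∉ A := by
      intro h
      have h1 := Finset.mem_Icc.mp (hAsub h)
      have h2 := Finset.mem_Icc.mp haI
      omega
    have hkey : Iv t \ ((Iv t).erase a ∪ A) = {a} := by
      ext x
      simp only [Finset.mem_sdiff, Finset.mem_union, Finset.mem_erase, Finset.mem_singleton,
        not_or, not_and]
      constructor
      · rintro ⟨hxI, hx1, hx2⟩
        by_contra hne
        exact (hx1 hne) hxI
      · rintro rfl
        exact ⟨haI, fun h => absurd rfl h, haA⟩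
    have hsd : ((Iv t).erase a ∪ A) \ Iv t = A := by
      rw [Finset.union_sdiff_distrib]
      rw [Finset.sdiff_eq_empty_iff_subset.mpr (Finset.erase_subset _ _), Finset.empty_union]
      apply Finset.sdiff_eq_self_of_disjoint
      rw [Finset.disjoint_left]
      intro x hxA hxI
      have h1 := Finset.mem_Icc.mp (hAsub hxA)
      have h2 := Finset.mem_Icc.mp hxI
      omega
    simp only [hkey, Finset.min'_singleton, hsd]

/-- **Codegree squared sum of the full `t`-star.** -/
theorem stmt_14 (t k n : ℕ) (ht : 0 < t) (htk : t ≤ k) (hkn : k ≤ n) :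
    (co2 n k ((KSets n k).filter fun F => Iv t ⊆ F) : ℤ) =
      ichoose ((n : ℤ) - t) ((k : ℤ) - t - 1) * ((n : ℤ) - k + 1) ^ 2
        + (t : ℤ) * ichoose ((n : ℤ) - t) ((k : ℤ) - t) := by
  set 𝓕 := (KSets n k).filter fun F => Iv t ⊆ F with h𝓕
  have hco : co2 n k 𝓕
      = ((KSets n (k-1)).filter fun E => Iv t ⊆ E).card * (n - k + 1)^2
        + ((KSets n (k-1)).filter fun E => (Iv t \ E).card = 1).card := by
    rw [co2, ← Finset.sum_filter_add_sum_filter_not (KSets n (k-1)) (fun E => Iv t ⊆ E)]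
    congr 1
    · have hc : ∀ E ∈ (KSets n (k-1)).filter (fun E => Iv t ⊆ E),
          codeg 𝓕 E ^ 2 = (n - k + 1)^2 := by
        intro E hE
        rw [Finset.mem_filter] at hE
        rw [h𝓕, codeg_one ht htk hkn hE.1 hE.2]
      rw [Finset.sum_congr rfl hc, Finset.sum_const, smul_eq_mul]
    · rw [← Finset.sum_filter_add_sum_filter_not
        ((KSets n (k-1)).filter fun E => ¬ Iv t ⊆ E) (fun E => (Iv t \ E).card = 1)]
      have hzero : ∑ E ∈ ((KSets n (k-1)).filter fun E => ¬ Iv t ⊆ E).filter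
          (fun E => ¬ (Iv t \ E).card = 1), codeg 𝓕 E ^ 2 = 0 := by
        apply Finset.sum_eq_zero
        intro E hE
        simp only [Finset.mem_filter] at hE
        obtain ⟨⟨hEk, hnsub⟩, hne1⟩ := hE
        have h2 : 2 ≤ (Iv t \ E).card := by
          have : (Iv t \ E).Nonempty := by
            rw [Finset.sdiff_nonempty]; exact hnsub
          have := Finset.card_pos.mpr this
          omega
        rw [h𝓕, codeg_zero ht htk hkn hEk h2]
        ring
      have hset : ((KSets n (k-1)).filter fun E => ¬ Iv t ⊆ E).filter
          (fun E => (Iv t \ E).card = 1)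
          = (KSets n (k-1)).filter (fun E => (Iv t \ E).card = 1) := by
        rw [Finset.filter_filter]
        apply Finset.filter_congr
        intro E hE
        constructor
        · exact fun h => h.2
        · intro h
          refine ⟨fun hsub => ?_, h⟩
          rw [Finset.sdiff_eq_empty_iff_subset.mpr hsub, Finset.card_empty] at h
          omega
      have hone : ∑ E ∈ (KSets n (k-1)).filter (fun E => (Iv t \ E).card = 1),
          codeg 𝓕 E ^ 2 = ((KSets n (k-1)).filter fun E => (Iv t \ E).card = 1).card := by
        rw [Finset.card_eq_sum_ones]
        apply Finset.sum_congr rfl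
        intro E hE
        rw [Finset.mem_filter] at hE
        rw [h𝓕, codeg_single ht htk hkn hE.1 hE.2, one_pow]
      rw [hset, hzero, hone, add_zero]
  rcases eq_or_lt_of_le htk with rfl | hlt
  · rw [hco, S1_empty ht, Finset.card_empty, zero_mul, zero_add,
      S2_card ht le_rfl hkn]
    rw [ichoose, ichoose]
    rw [if_neg (by omega), if_pos ⟨by omega, by omega⟩]
    have e1 : ((n:ℤ) - t).toNat = n - t := by omega
    have e2 : ((t:ℤ) - t).toNat = t - t := by omega
    rw [e1, e2]
    push_cast
    ring
  · rw [hco, S1_card ht hlt hkn, S2_card ht htk hkn]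
    rw [ichoose, ichoose]
    rw [if_pos ⟨by omega, by omega⟩, if_pos ⟨by omega, by omega⟩]
    have e1 : ((n:ℤ) - t).toNat = n - t := by omega
    have e2 : ((k:ℤ) - t - 1).toNat = k - 1 - t := by omega
    have e3 : ((k:ℤ) - t).toNat = k - t := by omega
    rw [e1, e2, e3]
    have e4 : ((n - k + 1 : ℕ) : ℤ) = (n:ℤ) - k + 1 := by omega
    push_cast [← e4]
    ring
end
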